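/- For each α ∈ {1,2,3}: (i) ‖B_cell^(−1/2) A^(α) B_cell^(−1/2)‖ ≤ ρ^(−1/2) ‖S_comp^(−1/2)‖; (ii) ‖B_cell^(−1/2) A^(α) B_cell^(−1/2)‖₁ ≤ 6 ρ^(−1/2) ‖S_comp^(−1/2)‖; (iii) ‖(B_cell^(−1/2) A^(α) B_cell^(−1/2))²‖₁ ≤ 6 ρ^(−1) ‖S_comp^(−1)‖. -/

import Mathlib

open Matrix
open scoped Matrix.Norms.L2Operator ComplexOrder Kronecker

noncomputable section

/-- Port helper: the old Mathlib `Matrix.PosSemidef.sqrt` (removed upstream), with its old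
definition via the spectral decomposition. -/
def Matrix.PosSemidef.sqrt {n : Type*} [Fintype n] [DecidableEq n] {A : Matrix n n ℂ}
    (hA : A.PosSemidef) : Matrix n n ℂ :=
  (hA.1.eigenvectorUnitary : Matrix n n ℂ) * diagonal ((↑) ∘ Real.sqrt ∘ hA.1.eigenvalues) *
    (star hA.1.eigenvectorUnitary : Matrix n n ℂ)

/-- The state-register index set, of cardinality `3 + 6 + 7 = 16`, corresponding to the
block partition of rows and columns into sizes `3 + 6 + 7`. -/
abbrev StateIdx : Type := Fin 3 ⊕ (Fin 6 ⊕ Fin 7)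

/-- The three `3 × 6` matrices `C^(1), C^(2), C^(3)` (here indexed by `Fin 3`). -/
def Cmat : Fin 3 → Matrix (Fin 3) (Fin 6) ℂ
  | 0 => !![1, 0, 0, 0, 0, 0; 0, 0, 0, 1, 0, 0; 0, 0, 0, 0, 1, 0]
  | 1 => !![0, 0, 0, 1, 0, 0; 0, 1, 0, 0, 0, 0; 0, 0, 0, 0, 0, 1]
  | 2 => !![0, 0, 0, 0, 1, 0; 0, 0, 0, 0, 0, 1; 0, 0, 1, 0, 0, 0]

/-- `A^(α)`: the `16 × 16` matrix with `C^(α)` as its `(1,2)` block, `(C^(α))ᵀ` as its `(2,1)`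
block, and zero blocks elsewhere, in the block partition `3 + (6 + 7)`. -/
def Amat (α : Fin 3) : Matrix StateIdx StateIdx ℂ :=
  Matrix.fromBlocks 0 (Matrix.fromCols (Cmat α) 0) (Matrix.fromRows (Cmat α)ᵀ 0) 0

/-- `B_cell = diag(ρ I₃, S_comp, I₇)`. -/
def Bcell (ρ : ℝ) (S : Matrix (Fin 6) (Fin 6) ℂ) : Matrix StateIdx StateIdx ℂ :=
  Matrix.fromBlocks ((ρ : ℂ) • 1) 0 0 (Matrix.fromBlocks S 0 0 1)

/-- `M^(−1/2)`: the inverse of the unique positive definite square root of a positive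
definite matrix `M`. -/
def invSqrt {ι : Type*} [Fintype ι] [DecidableEq ι] {M : Matrix ι ι ℂ}
    (hM : M.PosDef) : Matrix ι ι ℂ :=
  hM.posSemidef.sqrt⁻¹

/-- The spatial index set for `N` qubits, of cardinality `2^N`. -/
abbrev QubitIdx (N : ℕ) : Type := Fin N → Fin 2

def sigma01 : Matrix (Fin 2) (Fin 2) ℂ := !![0, 1; 0, 0]

def sigma10 : Matrix (Fin 2) (Fin 2) ℂ := !![0, 0; 1, 0]

/-- The Kronecker (tensor) product `f 0 ⊗ f 1 ⊗ ⋯ ⊗ f (N−1)` of a family of `2 × 2`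
matrices, realized on the index set `Fin N → Fin 2` (position `0` is the leftmost factor). -/
def tensorFamily {N : ℕ} (f : Fin N → Matrix (Fin 2) (Fin 2) ℂ) :
    Matrix (QubitIdx N) (QubitIdx N) ℂ :=
  Matrix.of fun x y => ∏ i, f i (x i) (y i)

/-- The factor at position `p ∈ {0, …, n−1}` of the pure tensor
`I₂^⊗(n−k) ⊗ a ⊗ b^⊗(k−1)` (for `1 ≤ k ≤ n`). -/
def cellFactor (n k : ℕ) (a b : Matrix (Fin 2) (Fin 2) ℂ) (p : ℕ) :
    Matrix (Fin 2) (Fin 2) ℂ :=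
  if p < n - k then 1 else if p = n - k then a else b

/-- `S_k^(α) = I₂^⊗(n(α−1)) ⊗ S_k^cell ⊗ I₂^⊗(n(3−α))` with
`S_k^cell = I₂^⊗(n−k) ⊗ σ01 ⊗ σ10^⊗(k−1) − I₂^⊗(n−k) ⊗ σ10 ⊗ σ01^⊗(k−1)`,
realized on `3n` qubits.  Here `α : Fin 3` is `0`-based and `1 ≤ k ≤ n`. -/
def Smat (n : ℕ) (α : Fin 3) (k : ℕ) :
    Matrix (QubitIdx (3 * n)) (QubitIdx (3 * n)) ℂ :=
  tensorFamily (fun i =>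
      if i.val / n = α.val then cellFactor n k sigma01 sigma10 (i.val % n) else 1) -
    tensorFamily (fun i =>
      if i.val / n = α.val then cellFactor n k sigma10 sigma01 (i.val % n) else 1)

/-- `D^(α) = (1/(2h)) ∑_{k=1}^n S_k^(α)`. -/
def Dmat (n : ℕ) (h : ℝ) (α : Fin 3) : Matrix (QubitIdx (3 * n)) (QubitIdx (3 * n)) ℂ :=
  (1 / (2 * (h : ℂ))) • ∑ k : Fin n, Smat n α (k.val + 1)

/-- The rank-one projector `P_j = |φ_j⟩⟨φ_j|`. -/
def Pmat (φ : Fin 16 → StateIdx → ℂ) (j : Fin 16) : Matrix StateIdx StateIdx ℂ :=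
  Matrix.vecMulVec (φ j) (star (φ j))

/-- `H_jk^(α) := P_j^(α) ⊗ (i λ_j^(α)/(2h)) S_k^(α)`. -/
def Hterm (n : ℕ) (h : ℝ) (lam : Fin 3 → Fin 16 → ℝ) (φ : Fin 3 → Fin 16 → StateIdx → ℂ)
    (α : Fin 3) (j : Fin 16) (k : Fin n) :
    Matrix (StateIdx × QubitIdx (3 * n)) (StateIdx × QubitIdx (3 * n)) ℂ :=
  Pmat (φ α) j ⊗ₖ ((Complex.I * (lam α j : ℂ) / (2 * (h : ℂ))) • Smat n α (k.val + 1))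

/-- The elastic-wave Hamiltonian `H = ∑_{α,j,k} H_jk^(α)`. -/
def Hfull (n : ℕ) (h : ℝ) (lam : Fin 3 → Fin 16 → ℝ) (φ : Fin 3 → Fin 16 → StateIdx → ℂ) :
    Matrix (StateIdx × QubitIdx (3 * n)) (StateIdx × QubitIdx (3 * n)) ℂ :=
  ∑ α : Fin 3, ∑ j : Fin 16, ∑ k : Fin n, Hterm n h lam φ α j k

/-- Ordered product `f (m−1) * f (m−2) * ⋯ * f 0` (largest index leftmost). -/
def prodDesc {M : Type*} [Monoid M] {m : ℕ} (f : Fin m → M) : M :=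
  ((List.finRange m).reverse.map f).prod

/-- Ordered product `f 0 * f 1 * ⋯ * f (m−1)` (smallest index leftmost). -/
def prodAsc {M : Type*} [Monoid M] {m : ℕ} (f : Fin m → M) : M :=
  ((List.finRange m).map f).prod

/-- The first-order Trotter operator `U₁(τ)`: the ordered product of the factors
`exp(−i H_jk^(α) τ)` over all triples `(α, j, k)`, in decreasing lexicographic order
(the factor with the largest `(α, j, k)` leftmost, the factor with the smallest rightmost). -/
def U1 (n : ℕ) (h : ℝ) (lam : Fin 3 → Fin 16 → ℝ) (φ : Fin 3 → Fin 16 → StateIdx → ℂ)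
    (τ : ℝ) : Matrix (StateIdx × QubitIdx (3 * n)) (StateIdx × QubitIdx (3 * n)) ℂ :=
  prodDesc fun α : Fin 3 => prodDesc fun j : Fin 16 => prodDesc fun k : Fin n =>
    NormedSpace.exp ((-(Complex.I * (τ : ℂ))) • Hterm n h lam φ α j k)

/-- The reversed-order product of the factors `exp(−i H_jk^(α) τ)`: increasing
lexicographic order in `(α, j, k)`. -/
def U1rev (n : ℕ) (h : ℝ) (lam : Fin 3 → Fin 16 → ℝ) (φ : Fin 3 → Fin 16 → StateIdx → ℂ)
    (τ : ℝ) : Matrix (StateIdx × QubitIdx (3 * n)) (StateIdx × QubitIdx (3 * n)) ℂ :=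
  prodAsc fun α : Fin 3 => prodAsc fun j : Fin 16 => prodAsc fun k : Fin n =>
    NormedSpace.exp ((-(Complex.I * (τ : ℂ))) • Hterm n h lam φ α j k)

/-- The second-order (symmetric) Trotter operator `U₂(τ) = U₁(τ/2) · Ũ₁(τ/2)`. -/
def U2 (n : ℕ) (h : ℝ) (lam : Fin 3 → Fin 16 → ℝ) (φ : Fin 3 → Fin 16 → StateIdx → ℂ)
    (τ : ℝ) : Matrix (StateIdx × QubitIdx (3 * n)) (StateIdx × QubitIdx (3 * n)) ℂ :=
  U1 n h lam φ (τ / 2) * U1rev n h lam φ (τ / 2)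

end

/-- The trace norm `‖M‖₁ := Tr √(Mᴴ M)` of a complex matrix, where `√` is the positive
semidefinite square root of the positive semidefinite matrix `Mᴴ M`. -/
noncomputable def traceNorm {m n : Type*} [Fintype m] [Fintype n] [DecidableEq n]
    (M : Matrix m n ℂ) : ℝ :=
  ((Matrix.posSemidef_conjTranspose_mul_self M).sqrt).trace.re

/-!
The square root of the block-diagonal `B_cell` is `diag(√ρ I₃, S^(1/2), I₇)`, so
`B_cell^(−1/2) A^(α) B_cell^(−1/2) = ρ^(−1/2) [[0, F], [Fᴴ, 0]]` with `F = [C^(α) S^(−1/2) | 0]`.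
Such an off-diagonal block matrix has norm at most `‖F‖ = ‖C^(α) S^(−1/2)‖ ≤ ‖S^(−1/2)‖`, the
rows of `C^(α)` being orthonormal; this is (i). The matrix `A^(α)` factors through a space of
dimension `6`, so the sandwiched matrix and its square have rank at most `6`, and the trace norm
of a matrix is at most its rank times its spectral norm, since its nonzero singular values are
bounded by the norm. With `‖S^(−1/2)‖² = ‖S⁻¹‖` this gives (ii) and (iii).
-/

namespace Matrix

section Square

variable {n : Type*} [Fintype n] [DecidableEq n]

namespace PosSemidef

lemma sqrt_eq_cfc {A : Matrix n n ℂ} (hA : A.PosSemidef) : hA.sqrt = cfc Real.sqrt A := by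
  rw [hA.1.cfc_eq, IsHermitian.cfc, Unitary.conjStarAlgAut_apply]
  rfl

lemma posSemidef_sqrt {A : Matrix n n ℂ} (hA : A.PosSemidef) : hA.sqrt.PosSemidef :=
  mul_mul_conjTranspose_same (posSemidef_diagonal_iff.mpr fun _ =>
    Complex.zero_le_real.mpr (Real.sqrt_nonneg _)) _

lemma nonneg_of_mem_spectrum {A : Matrix n n ℂ} (hA : A.PosSemidef) {x : ℝ}
    (hx : x ∈ spectrum ℝ A) : 0 ≤ x := by
  rw [hA.1.spectrum_real_eq_range_eigenvalues] at hx
  obtain ⟨i, rfl⟩ := hx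
  exact hA.eigenvalues_nonneg i

lemma sqrt_mul_self {A : Matrix n n ℂ} (hA : A.PosSemidef) : hA.sqrt * hA.sqrt = A := by
  have : IsSelfAdjoint A := hA.1
  rw [hA.sqrt_eq_cfc, ← cfc_mul Real.sqrt Real.sqrt A]
  conv_rhs => rw [← cfc_id' ℝ A]
  exact cfc_congr fun x hx => Real.mul_self_sqrt (hA.nonneg_of_mem_spectrum hx)

lemma sqrt_eq_of_sq_eq {A R : Matrix n n ℂ} (hA : A.PosSemidef) (hR : R.PosSemidef)
    (hRA : R ^ 2 = A) : hA.sqrt = R := by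
  have : IsSelfAdjoint R := hR.1
  subst hRA
  rw [hA.sqrt_eq_cfc, ← cfc_pow_id (R := ℝ) R 2, ← cfc_comp Real.sqrt (fun x => x ^ 2) R]
  conv_rhs => rw [← cfc_id' ℝ R]
  exact cfc_congr fun x hx => Real.sqrt_sq (hR.nonneg_of_mem_spectrum hx)

end PosSemidef

lemma IsHermitian.eigenvalues_le_l2_opNorm {A : Matrix n n ℂ} (hA : A.IsHermitian) (i : n) :
    hA.eigenvalues i ≤ ‖A‖ := by
  have : Nonempty n := ⟨i⟩
  exact (Real.le_norm_self _).trans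
    (spectrum.norm_le_norm_of_mem (hA.eigenvalues_mem_spectrum_real i))

lemma IsHermitian.re_trace_le_rank_mul_l2_opNorm {A : Matrix n n ℂ} (hA : A.IsHermitian) :
    A.trace.re ≤ A.rank * ‖A‖ := by
  rw [hA.trace_eq_sum_eigenvalues, hA.rank_eq_card_non_zero_eigs, Fintype.card_subtype,
    Complex.re_sum, ← Finset.sum_filter_ne_zero, ← nsmul_eq_mul]
  exact Finset.sum_le_card_nsmul _ _ _ fun i _ => hA.eigenvalues_le_l2_opNorm i

end Square

section Blocks

variable {m n : Type*} [Fintype m] [Fintype n] [DecidableEq m] [DecidableEq n]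

lemma PosSemidef.fromBlocks_zero₁₂_zero₂₁ {A : Matrix m m ℂ} {D : Matrix n n ℂ}
    (hA : A.PosSemidef) (hD : D.PosSemidef) : (fromBlocks A 0 0 D).PosSemidef := by
  let P₁ : Matrix (m ⊕ n) m ℂ := fromRows 1 0
  let P₂ : Matrix (m ⊕ n) n ℂ := fromRows 0 1
  have h : fromBlocks A 0 0 D = P₁ * A * P₁ᴴ + P₂ * D * P₂ᴴ := by
    ext (i | i) (j | j) <;>
      simp [P₁, P₂, conjTranspose_fromRows_eq_fromCols_conjTranspose, fromRows_mul]
  rw [h]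
  exact (hA.mul_mul_conjTranspose_same _).add (hD.mul_mul_conjTranspose_same _)

lemma l2_opNorm_fromBlocks_zero₁₁_zero₂₂_le {B : Matrix m n ℂ} {C : Matrix n m ℂ} {K : ℝ}
    (hB : ‖B‖ ≤ K) (hC : ‖C‖ ≤ K) : ‖fromBlocks 0 B C 0‖ ≤ K := by
  have hK : 0 ≤ K := (norm_nonneg B).trans hB
  rw [← l2_opNorm_toEuclideanCLM]
  refine ContinuousLinearMap.opNorm_le_bound _ hK fun x => ?_
  let x₁ : EuclideanSpace ℂ m := WithLp.toLp 2 fun i => x (Sum.inl i)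
  let x₂ : EuclideanSpace ℂ n := WithLp.toLp 2 fun j => x (Sum.inr j)
  have hx : ‖x‖ ^ 2 = ‖x₁‖ ^ 2 + ‖x₂‖ ^ 2 := by
    simp [x₁, x₂, EuclideanSpace.norm_sq_eq, Fintype.sum_sum_type]
  have hBx : ‖(EuclideanSpace.equiv m ℂ).symm (B *ᵥ x₂)‖ ≤ K * ‖x₂‖ :=
    (l2_opNorm_mulVec B x₂).trans (by gcongr)
  have hCx : ‖(EuclideanSpace.equiv n ℂ).symm (C *ᵥ x₁)‖ ≤ K * ‖x₁‖ :=
    (l2_opNorm_mulVec C x₁).trans (by gcongr)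
  refine (sq_le_sq₀ (norm_nonneg _) (by positivity)).mp ?_
  calc ‖toEuclideanCLM (n := m ⊕ n) (𝕜 := ℂ) (fromBlocks 0 B C 0) x‖ ^ 2
      = ‖(EuclideanSpace.equiv m ℂ).symm (B *ᵥ x₂)‖ ^ 2 +
          ‖(EuclideanSpace.equiv n ℂ).symm (C *ᵥ x₁)‖ ^ 2 := by
        simp [x₁, x₂, EuclideanSpace.norm_sq_eq, Fintype.sum_sum_type, fromBlocks_mulVec]
        rfl
    _ ≤ (K * ‖x₂‖) ^ 2 + (K * ‖x₁‖) ^ 2 := by gcongr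
    _ = (K * ‖x‖) ^ 2 := by linear_combination (-K ^ 2) * hx

lemma l2_opNorm_eq_of_mul_conjTranspose_eq {l : Type*} [Fintype l] [DecidableEq l]
    {A : Matrix m n ℂ} {B : Matrix m l ℂ} (h : A * Aᴴ = B * Bᴴ) : ‖A‖ = ‖B‖ := by
  refine (mul_self_inj (norm_nonneg _) (norm_nonneg _)).mp ?_
  rw [← l2_opNorm_conjTranspose A, ← l2_opNorm_conjTranspose B,
    ← l2_opNorm_conjTranspose_mul_self, ← l2_opNorm_conjTranspose_mul_self,
    conjTranspose_conjTranspose, conjTranspose_conjTranspose, h]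

end Blocks

lemma rank_fromBlocks_zero₁₁_zero₂₂_le {m n m' n' R : Type*} [Fintype m] [Fintype m'] [Fintype n']
    [DecidableEq m] [DecidableEq m'] [Field R] (B : Matrix m n' R) (C : Matrix n m' R) :
    (fromBlocks 0 B C 0).rank ≤ Fintype.card m + Fintype.card m' := by
  have h : fromBlocks 0 B C 0 = (fromBlocks 1 0 0 C : Matrix (m ⊕ n) (m ⊕ m') R) *
      (fromBlocks 0 B 1 0 : Matrix (m ⊕ m') (m' ⊕ n') R) := by
    simp [fromBlocks_multiply]
  rw [h, ← Fintype.card_sum]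
  exact (rank_mul_le_left _ _).trans (rank_le_card_width _)

end Matrix

lemma traceNorm_le_rank_mul_l2_opNorm {m n : Type*} [Fintype m] [Fintype n] [DecidableEq n]
    (N : Matrix m n ℂ) : traceNorm N ≤ N.rank * ‖N‖ := by
  have hP := posSemidef_conjTranspose_mul_self N
  have hQ : hP.sqrt.IsHermitian := hP.posSemidef_sqrt.1
  have hQQ : hP.sqrtᴴ * hP.sqrt = Nᴴ * N := by rw [hQ.eq, hP.sqrt_mul_self]
  have hnorm : ‖hP.sqrt‖ = ‖N‖ := (mul_self_inj (norm_nonneg _) (norm_nonneg _)).mp <| by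
    rw [← l2_opNorm_conjTranspose_mul_self, hQQ, l2_opNorm_conjTranspose_mul_self]
  have hrank : hP.sqrt.rank = N.rank := by
    rw [← rank_conjTranspose_mul_self hP.sqrt, hQQ, rank_conjTranspose_mul_self]
  rw [← hnorm, ← hrank]
  exact hQ.re_trace_le_rank_mul_l2_opNorm

section InvSqrt

variable {n : Type*} [Fintype n] [DecidableEq n]

lemma isHermitian_invSqrt {M : Matrix n n ℂ} (hM : M.PosDef) : (invSqrt hM).IsHermitian :=
  hM.posSemidef.posSemidef_sqrt.1.inv

lemma invSqrt_mul_sqrt {M : Matrix n n ℂ} (hM : M.PosDef) :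
    invSqrt hM * hM.posSemidef.sqrt = 1 := by
  refine nonsing_inv_mul _ (isUnit_of_mul_isUnit_left (y := hM.posSemidef.sqrt.det) ?_)
  rw [← det_mul, hM.posSemidef.sqrt_mul_self]
  exact hM.isUnit.map detMonoidHom

lemma l2_opNorm_invSqrt_mul_self {M : Matrix n n ℂ} (hM : M.PosDef) :
    ‖invSqrt hM‖ * ‖invSqrt hM‖ = ‖M⁻¹‖ := by
  rw [← l2_opNorm_conjTranspose_mul_self, (isHermitian_invSqrt hM).eq, invSqrt,
    ← Matrix.mul_inv_rev, hM.posSemidef.sqrt_mul_self]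

end InvSqrt

lemma Cmat_conjTranspose (α : Fin 3) : (Cmat α)ᴴ = (Cmat α)ᵀ := by
  ext i j
  fin_cases α <;> fin_cases i <;> fin_cases j <;> simp [Cmat]

lemma Cmat_mul_conjTranspose (α : Fin 3) : Cmat α * (Cmat α)ᴴ = 1 := by
  ext i j
  fin_cases α <;> fin_cases i <;> fin_cases j <;> simp [Cmat, mul_apply, Fin.sum_univ_succ]

lemma l2_opNorm_Cmat (α : Fin 3) : ‖Cmat α‖ = 1 := by
  rw [l2_opNorm_eq_of_mul_conjTranspose_eq (B := (1 : Matrix (Fin 3) (Fin 3) ℂ)) (by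
    rw [Cmat_mul_conjTranspose, conjTranspose_one, mul_one]), CStarRing.norm_one]

lemma invSqrt_Bcell {ρ : ℝ} (hρ : 0 < ρ) {S : Matrix (Fin 6) (Fin 6) ℂ} (hS : S.PosDef)
    (hB : (Bcell ρ S).PosDef) :
    invSqrt hB = fromBlocks ((((√ρ)⁻¹ : ℝ) : ℂ) • 1) 0 0 (fromBlocks (invSqrt hS) 0 0 1) := by
  let R : Matrix StateIdx StateIdx ℂ :=
    fromBlocks ((√ρ : ℂ) • 1) 0 0 (fromBlocks hS.posSemidef.sqrt 0 0 1)
  have hR₁₁ : ((√ρ : ℂ) • (1 : Matrix (Fin 3) (Fin 3) ℂ)).PosSemidef :=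
    PosSemidef.one.smul (Complex.zero_le_real.2 (Real.sqrt_nonneg ρ))
  have hR₂₂ : (fromBlocks hS.posSemidef.sqrt 0 0 1 :
      Matrix (Fin 6 ⊕ Fin 7) (Fin 6 ⊕ Fin 7) ℂ).PosSemidef :=
    hS.posSemidef.posSemidef_sqrt.fromBlocks_zero₁₂_zero₂₁ PosSemidef.one
  have hR_sq : R ^ 2 = Bcell ρ S := by
    simp [R, Bcell, sq, fromBlocks_multiply, hS.posSemidef.sqrt_mul_self, smul_smul,
      Real.mul_self_sqrt hρ.le]
  rw [invSqrt, hB.posSemidef.sqrt_eq_of_sq_eq (hR₁₁.fromBlocks_zero₁₂_zero₂₁ hR₂₂) hR_sq]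
  refine inv_eq_left_inv ?_
  simp only [fromBlocks_multiply, Matrix.smul_mul, Matrix.mul_smul, smul_smul, Matrix.one_mul,
    ← Complex.ofReal_mul, mul_inv_cancel₀ (Real.sqrt_pos.2 hρ).ne', Complex.ofReal_one, one_smul,
    invSqrt_mul_sqrt, Matrix.mul_zero, Matrix.zero_mul, add_zero, zero_add, smul_zero,
    fromBlocks_one]

lemma invSqrt_Bcell_mul_Amat_mul_invSqrt_Bcell {ρ : ℝ} (hρ : 0 < ρ)
    {S : Matrix (Fin 6) (Fin 6) ℂ} (hS : S.PosDef) (hB : (Bcell ρ S).PosDef) (α : Fin 3) :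
    invSqrt hB * Amat α * invSqrt hB =
      (((√ρ)⁻¹ : ℝ) : ℂ) • fromBlocks 0 (fromCols (Cmat α * invSqrt hS) 0)
        (fromCols (Cmat α * invSqrt hS) (0 : Matrix (Fin 3) (Fin 7) ℂ))ᴴ 0 := by
  rw [invSqrt_Bcell hρ hS hB, Amat, conjTranspose_fromCols_eq_fromRows_conjTranspose,
    conjTranspose_mul, (isHermitian_invSqrt hS).eq, Cmat_conjTranspose]
  simp [fromBlocks_multiply, fromCols_mul_fromBlocks, fromBlocks_mul_fromRows, fromBlocks_smul]

lemma l2_opNorm_invSqrt_Bcell_mul_Amat_mul_invSqrt_Bcell_le {ρ : ℝ} (hρ : 0 < ρ)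
    {S : Matrix (Fin 6) (Fin 6) ℂ} (hS : S.PosDef) (hB : (Bcell ρ S).PosDef) (α : Fin 3) :
    ‖invSqrt hB * Amat α * invSqrt hB‖ ≤ (√ρ)⁻¹ * ‖invSqrt hS‖ := by
  rw [invSqrt_Bcell_mul_Amat_mul_invSqrt_Bcell hρ hS hB, norm_smul, Complex.norm_real,
    Real.norm_of_nonneg (by positivity)]
  gcongr
  set F : Matrix (Fin 3) (Fin 6 ⊕ Fin 7) ℂ := fromCols (Cmat α * invSqrt hS) 0
  have hF : ‖F‖ ≤ ‖invSqrt hS‖ := by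
    rw [l2_opNorm_eq_of_mul_conjTranspose_eq (B := Cmat α * invSqrt hS) (by
      simp [F, conjTranspose_fromCols_eq_fromRows_conjTranspose, fromCols_mul_fromRows])]
    calc ‖Cmat α * invSqrt hS‖ ≤ ‖Cmat α‖ * ‖invSqrt hS‖ := l2_opNorm_mul _ _
      _ = ‖invSqrt hS‖ := by rw [l2_opNorm_Cmat, one_mul]
  exact l2_opNorm_fromBlocks_zero₁₁_zero₂₂_le hF (by rwa [l2_opNorm_conjTranspose])

lemma rank_Amat_le (α : Fin 3) : (Amat α).rank ≤ 6 :=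
  rank_fromBlocks_zero₁₁_zero₂₂_le _ _

/-- For each `α ∈ {1,2,3}`:
(i) `‖B_cell^(−1/2) A^(α) B_cell^(−1/2)‖ ≤ ρ^(−1/2) ‖S_comp^(−1/2)‖`;
(ii) `‖B_cell^(−1/2) A^(α) B_cell^(−1/2)‖₁ ≤ 6 ρ^(−1/2) ‖S_comp^(−1/2)‖`;
(iii) `‖(B_cell^(−1/2) A^(α) B_cell^(−1/2))²‖₁ ≤ 6 ρ^(−1) ‖S_comp^(−1)‖`. -/
theorem elastic_cell_operator_bounds (ρ : ℝ) (hρ : 0 < ρ)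
    (S : Matrix (Fin 6) (Fin 6) ℂ) (hS : S.PosDef)
    (hB : (Bcell ρ S).PosDef) (α : Fin 3) :
    ‖invSqrt hB * Amat α * invSqrt hB‖ ≤ ρ ^ (-(1 / 2) : ℝ) * ‖invSqrt hS‖ ∧
    traceNorm (invSqrt hB * Amat α * invSqrt hB) ≤
      6 * (ρ ^ (-(1 / 2) : ℝ) * ‖invSqrt hS‖) ∧
    traceNorm ((invSqrt hB * Amat α * invSqrt hB) ^ 2) ≤ 6 * (ρ⁻¹ * ‖S⁻¹‖) := by
  set M := invSqrt hB * Amat α * invSqrt hB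
  have hM : ‖M‖ ≤ (√ρ)⁻¹ * ‖invSqrt hS‖ :=
    l2_opNorm_invSqrt_Bcell_mul_Amat_mul_invSqrt_Bcell_le hρ hS hB α
  have hrank : M.rank ≤ 6 :=
    (rank_mul_le_left _ _).trans ((rank_mul_le_right _ _).trans (rank_Amat_le α))
  have hrank_sq : (M ^ 2).rank ≤ 6 := by
    rw [sq]
    exact (rank_mul_le_left M M).trans hrank
  rw [Real.rpow_neg hρ.le, ← Real.sqrt_eq_rpow]
  refine ⟨hM, ?_, ?_⟩
  · calc traceNorm M ≤ M.rank * ‖M‖ := traceNorm_le_rank_mul_l2_opNorm M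
      _ ≤ 6 * ((√ρ)⁻¹ * ‖invSqrt hS‖) := by gcongr; exact_mod_cast hrank
  · calc traceNorm (M ^ 2) ≤ (M ^ 2).rank * ‖M ^ 2‖ := traceNorm_le_rank_mul_l2_opNorm _
      _ ≤ 6 * ((√ρ)⁻¹ * ‖invSqrt hS‖) ^ 2 := by
        gcongr
        · exact_mod_cast hrank_sq
        · exact (norm_pow_le M 2).trans (by gcongr)
      _ = 6 * (ρ⁻¹ * ‖S⁻¹‖) := by
        rw [mul_pow, inv_pow, Real.sq_sqrt hρ.le, sq, l2_opNorm_invSqrt_mul_self]
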